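/- Let f ∈ 𝒰(λ), 0 < λ ≤ 1, with f(z) = z + a₂z² + ... . Then the third Hankel determinant H₃(1) = a₃(a₂a₄ − a₃²) − a₄(a₄ − a₂a₃) + a₅(a₃ − a₂²) satisfies |H₃(1)| ≤ λ²/4, with equality for f(z) = z/(1 − (λ/2)z³). -/

import Mathlib

/-!
With `φ z = z / f z = 1 + q₁ z + q₂ z² + ⋯`, the coefficients of `f` are polynomials in the `qₙ`,
and `H₃(1) = q₂ q₄ - q₃²`. The quantity bounded in `𝒰(λ)` is
`ω = (z / f)² f' - 1 = φ - z φ' - 1 = -∑ (n - 1) qₙ zⁿ`, so by Schwarz's lemma `ω = z² h` with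
`|h| ≤ λ` and `h = -q₂ - 2 q₃ z - 3 q₄ z² - ⋯`. Hence `H₃(1) = λ² (c₀ c₂ / 3 - c₁² / 4)` for the
Schur function `h / λ = c₀ + c₁ z + c₂ z² + ⋯`, and one step of Schur's algorithm gives
`|c₁| ≤ 1 - |c₀|²` and `|c₂ (1 - |c₀|²) + c̄₀ c₁²| ≤ (1 - |c₀|²)² - |c₁|²`, which force
`|c₀ c₂ / 3 - c₁² / 4| ≤ 1 / 4`. For `z / (1 - (λ / 2) z³)` one computes `H₃(1) = -(λ / 2)²`.
-/

open Complex Metric Filter Set Finset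
open scoped Topology ComplexConjugate

section TaylorCoeff

variable {𝕜 : Type*} [NontriviallyNormedField 𝕜] {f g : 𝕜 → 𝕜}

noncomputable def taylorCoeff (f : 𝕜 → 𝕜) (n : ℕ) : 𝕜 := iteratedDeriv n f 0 / n.factorial

@[simp]
lemma taylorCoeff_zero (f : 𝕜 → 𝕜) : taylorCoeff f 0 = f 0 := by
  simp [taylorCoeff]

lemma taylorCoeff_one (f : 𝕜 → 𝕜) : taylorCoeff f 1 = deriv f 0 := by
  simp [taylorCoeff]

lemma Filter.EventuallyEq.taylorCoeff_eq (h : f =ᶠ[𝓝 0] g) (n : ℕ) :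
    taylorCoeff f n = taylorCoeff g n := by
  rw [taylorCoeff, taylorCoeff, h.iteratedDeriv_eq]

lemma taylorCoeff_const (c : 𝕜) (n : ℕ) :
    taylorCoeff (fun _ => c) n = if n = 0 then c else 0 := by
  rcases n with _ | n <;> simp [taylorCoeff, iteratedDeriv_const]

lemma taylorCoeff_const_mul (c : 𝕜) (f : 𝕜 → 𝕜) (n : ℕ) :
    taylorCoeff (fun z => c * f z) n = c * taylorCoeff f n := by
  rw [taylorCoeff, taylorCoeff, iteratedDeriv_const_mul_field, mul_div_assoc]

lemma taylorCoeff_div_const (f : 𝕜 → 𝕜) (c : 𝕜) (n : ℕ) :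
    taylorCoeff (fun z => f z / c) n = taylorCoeff f n / c := by
  rw [taylorCoeff, taylorCoeff, iteratedDeriv_div_const, div_right_comm]

lemma taylorCoeff_add [CompleteSpace 𝕜] (hf : AnalyticAt 𝕜 f 0) (hg : AnalyticAt 𝕜 g 0) (n : ℕ) :
    taylorCoeff (fun z => f z + g z) n = taylorCoeff f n + taylorCoeff g n := by
  rw [taylorCoeff, iteratedDeriv_fun_add hf.contDiffAt hg.contDiffAt, add_div]; rfl

lemma taylorCoeff_sub [CompleteSpace 𝕜] (hf : AnalyticAt 𝕜 f 0) (hg : AnalyticAt 𝕜 g 0) (n : ℕ) :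
    taylorCoeff (fun z => f z - g z) n = taylorCoeff f n - taylorCoeff g n := by
  rw [taylorCoeff, iteratedDeriv_fun_sub hf.contDiffAt hg.contDiffAt, sub_div]; rfl

lemma taylorCoeff_mul [CompleteSpace 𝕜] [CharZero 𝕜] (hf : AnalyticAt 𝕜 f 0)
    (hg : AnalyticAt 𝕜 g 0) (n : ℕ) :
    taylorCoeff (fun z => f z * g z) n =
      ∑ i ∈ range (n + 1), taylorCoeff f i * taylorCoeff g (n - i) := by
  rw [taylorCoeff, iteratedDeriv_fun_mul hf.contDiffAt hg.contDiffAt, sum_div]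
  refine sum_congr rfl fun i hi => ?_
  have hin : i ≤ n := Nat.lt_succ_iff.mp (mem_range.mp hi)
  rw [taylorCoeff, taylorCoeff, ← Nat.choose_mul_factorial_mul_factorial hin]
  have := (Nat.choose_pos hin).ne'
  push_cast
  field_simp

lemma taylorCoeff_id_mul [CompleteSpace 𝕜] [CharZero 𝕜] (hf : AnalyticAt 𝕜 f 0) (n : ℕ) :
    taylorCoeff (fun z => z * f z) (n + 1) = taylorCoeff f n := by
  rw [taylorCoeff_mul (f := fun z => z) analyticAt_id hf, sum_eq_single 1]
  · simp [taylorCoeff_one]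
  · intro i _ hi
    rcases i with _ | _ | i <;> simp_all [taylorCoeff, iteratedDeriv_fun_id_zero]
  · simp

lemma taylorCoeff_deriv [CharZero 𝕜] (f : 𝕜 → 𝕜) (n : ℕ) :
    taylorCoeff (deriv f) n = (n + 1) * taylorCoeff f (n + 1) := by
  rw [taylorCoeff, taylorCoeff, ← iteratedDeriv_succ', Nat.factorial_succ]
  push_cast
  field_simp

lemma taylorCoeff_dslope [CompleteSpace 𝕜] [CharZero 𝕜] (hf : AnalyticAt 𝕜 f 0) (n : ℕ) :
    taylorCoeff (dslope f 0) n = taylorCoeff f (n + 1) := by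
  have hp := hf.hasFPowerSeriesAt.has_fpower_series_dslope_fslope
  have := congrArg (·.coeff n) (hp.analyticAt.hasFPowerSeriesAt.eq_formalMultilinearSeries hp)
  simpa [taylorCoeff, FormalMultilinearSeries.coeff_fslope] using this

lemma inv_dslope_sub_mul_deriv {f : 𝕜 → 𝕜} {z : 𝕜} (hf0 : f 0 = 0) (hz : z ≠ 0)
    (hfz : f z ≠ 0) (hf : DifferentiableAt 𝕜 f z) :
    (dslope f 0 z)⁻¹ - z * deriv (fun w => (dslope f 0 w)⁻¹) z = (z / f z) ^ 2 * deriv f z := by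
  have hφ : (fun w => (dslope f 0 w)⁻¹) =ᶠ[𝓝 z] fun w => w / f w :=
    (eventually_ne_nhds hz).mono fun w hw => by
      dsimp only
      rw [dslope_of_ne _ hw, slope_def_field, hf0, sub_zero, sub_zero, inv_div]
  rw [hφ.deriv_eq, hφ.eq_of_nhds, ((hasDerivAt_id' z).fun_div hf.hasDerivAt hfz).deriv]
  field_simp
  ring

end TaylorCoeff

def hankelDet3 {R : Type*} [CommRing R] (a : ℕ → R) : R :=
  a 3 * (a 2 * a 4 - a 3 ^ 2) - a 4 * (a 4 - a 2 * a 3) + a 5 * (a 3 - a 2 ^ 2)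

lemma hankelDet3_eq_of_mul_eq_one {R : Type*} [CommRing R] {a q : ℕ → R} (ha1 : a 1 = 1)
    (hq0 : q 0 = 1) (h : ∀ n, ∑ i ∈ range (n + 2), a (i + 1) * q (n + 1 - i) = 0) :
    hankelDet3 a = q 2 * q 4 - q 3 ^ 2 := by
  have h1 := h 0
  have h2 := h 1
  have h3 := h 2
  have h4 := h 3
  simp only [sum_range_succ, sum_range_zero, ha1, hq0] at h1 h2 h3 h4
  norm_num at h1 h2 h3 h4
  have ha2 : a 2 = -q 1 := by linear_combination h1
  have ha3 : a 3 = q 1 ^ 2 - q 2 := by linear_combination h2 - q 1 * h1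
  have ha4 : a 4 = -q 1 ^ 3 + 2 * q 1 * q 2 - q 3 := by
    linear_combination h3 - q 1 * h2 + (q 1 ^ 2 - q 2) * h1
  have ha5 : a 5 = q 1 ^ 4 - 3 * q 1 ^ 2 * q 2 + q 2 ^ 2 + 2 * q 1 * q 3 - q 4 := by
    linear_combination h4 - q 1 * h3 + (q 1 ^ 2 - q 2) * h2 + (-q 1 ^ 3 + 2 * q 1 * q 2 - q 3) * h1
  rw [hankelDet3, ha2, ha3, ha4, ha5]
  ring

section HankelDeterminant

variable {𝕜 : Type*} [NontriviallyNormedField 𝕜] [CompleteSpace 𝕜] [CharZero 𝕜]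

lemma hankelDet3_taylorCoeff_eq {f : 𝕜 → 𝕜} (hf : AnalyticAt 𝕜 f 0) (hf1 : deriv f 0 = 1) :
    hankelDet3 (taylorCoeff f) =
      taylorCoeff (fun z => (dslope f 0 z)⁻¹) 2 * taylorCoeff (fun z => (dslope f 0 z)⁻¹) 4 -
        taylorCoeff (fun z => (dslope f 0 z)⁻¹) 3 ^ 2 := by
  have hF : AnalyticAt 𝕜 (dslope f 0) 0 :=
    hf.hasFPowerSeriesAt.has_fpower_series_dslope_fslope.analyticAt
  have hF0 : dslope f 0 0 = 1 := by rw [dslope_same, hf1]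
  have hφ : AnalyticAt 𝕜 (fun z => (dslope f 0 z)⁻¹) 0 := hF.inv (by rw [hF0]; exact one_ne_zero)
  have hone : (fun z => dslope f 0 z * (dslope f 0 z)⁻¹) =ᶠ[𝓝 0] fun _ => 1 :=
    (hF.continuousAt.eventually_ne (by rw [hF0]; exact one_ne_zero)).mono fun _ hz =>
      mul_inv_cancel₀ hz
  refine hankelDet3_eq_of_mul_eq_one (by rw [taylorCoeff_one, hf1])
    (by rw [taylorCoeff_zero, hF0, inv_one]) fun n => ?_
  have := hone.taylorCoeff_eq (n + 1)
  rw [taylorCoeff_mul hF hφ, taylorCoeff_const, if_neg n.succ_ne_zero] at this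
  simpa only [taylorCoeff_dslope hf] using this

lemma taylorCoeff_sub_mul_deriv_sub_one {φ : 𝕜 → 𝕜} (hφ : AnalyticAt 𝕜 φ 0) (n : ℕ) :
    taylorCoeff (fun z => φ z - z * deriv φ z - 1) (n + 1) = -n * taylorCoeff φ (n + 1) := by
  have hzφ' : AnalyticAt 𝕜 (fun z => z * deriv φ z) 0 := analyticAt_id.mul hφ.deriv
  have hφzφ' : AnalyticAt 𝕜 (fun z => φ z - z * deriv φ z) 0 := hφ.sub hzφ'
  rw [taylorCoeff_sub hφzφ' analyticAt_const, taylorCoeff_sub hφ hzφ',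
    taylorCoeff_id_mul hφ.deriv, taylorCoeff_deriv, taylorCoeff_const, if_neg n.succ_ne_zero]
  ring

lemma hankelDet3_taylorCoeff_div_one_sub_mul_pow_three (c : 𝕜) :
    hankelDet3 (taylorCoeff fun z => z / (1 - c * z ^ 3)) = -c ^ 2 := by
  set g : 𝕜 → 𝕜 := fun z => z / (1 - c * z ^ 3)
  have hden : ∀ᶠ z in 𝓝 (0 : 𝕜), 1 - c * z ^ 3 ≠ 0 :=
    (by fun_prop : Continuous fun z : 𝕜 => 1 - c * z ^ 3).continuousAt.eventually_ne (by simp)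
  have hg : AnalyticAt 𝕜 g 0 := analyticAt_id.div (by fun_prop) hden.self_of_nhds
  have hrel : g =ᶠ[𝓝 0] fun z => z * (1 + c * (z * (z * g z))) := hden.mono fun z hz => by
    have hz' : 1 - z ^ 3 * c ≠ 0 := by rwa [mul_comm]
    simp only [g]
    field_simp
    ring
  have hzg : AnalyticAt 𝕜 (fun z => z * g z) 0 := analyticAt_id.mul hg
  have hzzg : AnalyticAt 𝕜 (fun z => c * (z * (z * g z))) 0 :=
    analyticAt_const.mul (analyticAt_id.mul hzg)
  have hcoeff (n : ℕ) : taylorCoeff g (n + 1) =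
      (if n = 0 then 1 else 0) + c * taylorCoeff (fun z => z * (z * g z)) n := by
    have h1zzg : AnalyticAt 𝕜 (fun z => 1 + c * (z * (z * g z))) 0 := analyticAt_const.add hzzg
    rw [hrel.taylorCoeff_eq, taylorCoeff_id_mul h1zzg,
      taylorCoeff_add analyticAt_const hzzg, taylorCoeff_const, taylorCoeff_const_mul]
  have hg0 : g 0 = 0 := by simp [g]
  have b1 : taylorCoeff g 1 = 1 := by simp [hcoeff]
  have b2 : taylorCoeff g 2 = 0 := by rw [hcoeff, taylorCoeff_id_mul hzg]; simp
  have b3 : taylorCoeff g 3 = 0 := by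
    rw [hcoeff, taylorCoeff_id_mul hzg, taylorCoeff_id_mul hg]; simp [hg0]
  have b4 : taylorCoeff g 4 = c := by
    rw [hcoeff, taylorCoeff_id_mul hzg, taylorCoeff_id_mul hg, b1]; simp
  have b5 : taylorCoeff g 5 = 0 := by
    rw [hcoeff, taylorCoeff_id_mul hzg, taylorCoeff_id_mul hg, b2]; simp
  rw [hankelDet3, b2, b3, b4, b5]
  ring

end HankelDeterminant

lemma norm_sub_le_norm_one_sub_conj_mul {u w : ℂ} (hu : ‖u‖ ≤ 1) (hw : ‖w‖ ≤ 1) :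
    ‖w - u‖ ≤ ‖1 - conj u * w‖ := by
  have key : ‖1 - conj u * w‖ ^ 2 - ‖w - u‖ ^ 2 = (1 - ‖u‖ ^ 2) * (1 - ‖w‖ ^ 2) := by
    simp only [← normSq_eq_norm_sq, normSq_apply, sub_re, sub_im, mul_re, mul_im, conj_re,
      conj_im, one_re, one_im]
    ring
  have : 0 ≤ (1 - ‖u‖ ^ 2) * (1 - ‖w‖ ^ 2) :=
    mul_nonneg (by nlinarith [norm_nonneg u]) (by nlinarith [norm_nonneg w])
  exact (pow_le_pow_iff_left₀ (norm_nonneg _) (norm_nonneg _) two_ne_zero).mp (by linarith)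

lemma mapsTo_dslope_of_mapsTo_closedBall {w : ℂ → ℂ} {C : ℝ}
    (hw : DifferentiableOn ℂ w (ball 0 1)) (hw0 : w 0 = 0)
    (hwC : MapsTo w (ball 0 1) (closedBall 0 C)) :
    MapsTo (dslope w 0) (ball 0 1) (closedBall 0 C) := fun z hz => by
  simpa using norm_dslope_le_div_of_mapsTo_ball hw (by rwa [hw0]) hz

lemma norm_one_sub_ofReal_norm_sq {u : ℂ} (hu : ‖u‖ ≤ 1) :
    ‖1 - (‖u‖ : ℂ) ^ 2‖ = 1 - ‖u‖ ^ 2 := by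
  rw [← ofReal_pow, ← ofReal_one, ← ofReal_sub, norm_real,
    Real.norm_of_nonneg (by nlinarith [norm_nonneg u])]

lemma norm_schur_combination_le {u s₀ s₁ : ℂ} (hu : ‖u‖ ≤ 1) (hs₁ : ‖s₁‖ ≤ 1 - ‖s₀‖ ^ 2) :
    ‖u * ((1 - ‖u‖ ^ 2) * (s₁ - conj u * s₀ ^ 2)) / 3 - ((1 - ‖u‖ ^ 2) * s₀) ^ 2 / 4‖
      ≤ 1 / 4 := by
  have hu0 : 0 ≤ ‖u‖ := norm_nonneg u
  have hm : 0 ≤ 1 - ‖u‖ ^ 2 := by nlinarith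
  have hdiff : ‖s₁ - conj u * s₀ ^ 2‖ ≤ ‖s₁‖ + ‖u‖ * ‖s₀‖ ^ 2 := by
    refine (norm_sub_le _ _).trans_eq ?_
    rw [norm_mul, norm_pow, RCLike.norm_conj]
  calc _ ≤ ‖u‖ * (1 - ‖u‖ ^ 2) * ‖s₁ - conj u * s₀ ^ 2‖ / 3
        + (1 - ‖u‖ ^ 2) ^ 2 * ‖s₀‖ ^ 2 / 4 := by
        refine (norm_sub_le _ _).trans_eq ?_
        simp only [norm_div, norm_mul, norm_pow, norm_one_sub_ofReal_norm_sq hu, RCLike.norm_ofNat]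
        ring
    _ ≤ ‖u‖ * (1 - ‖u‖ ^ 2) * (1 - ‖s₀‖ ^ 2 + ‖u‖ * ‖s₀‖ ^ 2) / 3
        + (1 - ‖u‖ ^ 2) ^ 2 * ‖s₀‖ ^ 2 / 4 := by
        gcongr
        linarith
    _ ≤ 1 / 4 := by
        -- `3 - 12 * lhs = (1 - ‖s₀‖²) (1 - ‖u‖²) (1 - ‖u‖) (3 - ‖u‖) + 2 ‖u‖² + ‖u‖⁴`
        have hy : ‖s₀‖ ^ 2 ≤ 1 := by linarith [norm_nonneg s₁]
        nlinarith [mul_nonneg (mul_nonneg (sub_nonneg.2 hy) hm)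
          (mul_nonneg (sub_nonneg.2 hu) (by linarith : (0 : ℝ) ≤ 3 - ‖u‖)), pow_nonneg hu0 4]

noncomputable def schurTransform (v : ℂ → ℂ) : ℂ → ℂ :=
  dslope (fun z => (v z - v 0) / (1 - conj (v 0) * v z)) 0

section SchurFunction

variable {v : ℂ → ℂ}

lemma taylorCoeff_succ_eq_zero_of_norm_eq_one (hv : DifferentiableOn ℂ v (ball 0 1))
    (hvb : MapsTo v (ball 0 1) (closedBall 0 1)) (h0 : ‖v 0‖ = 1) (n : ℕ) :
    taylorCoeff v (n + 1) = 0 := by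
  have hmax : IsMaxOn (norm ∘ v) (ball 0 1) 0 := fun z hz => by
    simpa [h0] using hvb hz
  have hconst : v =ᶠ[𝓝 0] fun _ => v 0 :=
    Filter.eventually_of_mem (ball_mem_nhds 0 one_pos) <|
      eqOn_of_isPreconnected_of_isMaxOn_norm (convex_ball 0 1).isPreconnected isOpen_ball hv
        (mem_ball_self one_pos) hmax
  rw [hconst.taylorCoeff_eq, taylorCoeff_const, if_neg n.succ_ne_zero]

lemma one_sub_conj_mul_ne_zero (hvb : MapsTo v (ball 0 1) (closedBall 0 1)) (h0 : ‖v 0‖ < 1)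
    {z : ℂ} (hz : z ∈ ball 0 1) : 1 - conj (v 0) * v z ≠ 0 := by
  have hlt : ‖conj (v 0) * v z‖ < 1 := by
    rw [norm_mul, RCLike.norm_conj]
    calc ‖v 0‖ * ‖v z‖ ≤ ‖v 0‖ * 1 :=
          mul_le_mul_of_nonneg_left (by simpa using hvb hz) (norm_nonneg _)
      _ < 1 := by rwa [mul_one]
  intro h
  rw [← sub_eq_zero.mp h, norm_one] at hlt
  exact hlt.false

lemma differentiableOn_schurTransform (hv : DifferentiableOn ℂ v (ball 0 1))
    (hvb : MapsTo v (ball 0 1) (closedBall 0 1)) (h0 : ‖v 0‖ < 1) :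
    DifferentiableOn ℂ (schurTransform v) (ball 0 1) :=
  (differentiableOn_dslope (ball_mem_nhds 0 one_pos)).2 <|
    (hv.sub_const _).div ((hv.const_mul _).const_sub 1) fun _ hz =>
      one_sub_conj_mul_ne_zero hvb h0 hz

lemma mapsTo_schurTransform (hv : DifferentiableOn ℂ v (ball 0 1))
    (hvb : MapsTo v (ball 0 1) (closedBall 0 1)) (h0 : ‖v 0‖ < 1) :
    MapsTo (schurTransform v) (ball 0 1) (closedBall 0 1) := by
  refine mapsTo_dslope_of_mapsTo_closedBall
    (differentiableOn_schurTransform hv hvb h0).of_dslope (by simp) fun z hz => ?_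
  rw [mem_closedBall_zero_iff, norm_div]
  exact div_le_one_of_le₀ (norm_sub_le_norm_one_sub_conj_mul h0.le (by simpa using hvb hz))
    (norm_nonneg _)

lemma taylorCoeff_eq_schurTransform (hv : DifferentiableOn ℂ v (ball 0 1))
    (hvb : MapsTo v (ball 0 1) (closedBall 0 1)) (h0 : ‖v 0‖ < 1) :
    taylorCoeff v 1 = (1 - ‖v 0‖ ^ 2) * schurTransform v 0 ∧
      taylorCoeff v 2 = (1 - ‖v 0‖ ^ 2) *
        (taylorCoeff (schurTransform v) 1 - conj (v 0) * schurTransform v 0 ^ 2) := by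
  set T := fun z => (v z - v 0) / (1 - conj (v 0) * v z)
  have hball : ball (0 : ℂ) 1 ∈ 𝓝 0 := ball_mem_nhds 0 one_pos
  have hT : AnalyticAt ℂ T 0 :=
    (differentiableOn_schurTransform hv hvb h0).of_dslope.analyticAt hball
  have hva : AnalyticAt ℂ v 0 := hv.analyticAt hball
  have hrel : (fun z => T z - conj (v 0) * (T z * v z)) =ᶠ[𝓝 0] fun z => v z - v 0 := by
    filter_upwards [hball] with z hz
    have : T z * (1 - conj (v 0) * v z) = v z - v 0 :=
      div_mul_cancel₀ _ (one_sub_conj_mul_ne_zero hvb h0 hz)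
    linear_combination this
  have hcoeff (n : ℕ) : taylorCoeff T n -
      conj (v 0) * ∑ i ∈ range (n + 1), taylorCoeff T i * taylorCoeff v (n - i) =
        taylorCoeff v n - if n = 0 then v 0 else 0 := by
    have := hrel.taylorCoeff_eq n
    rwa [taylorCoeff_sub hT (g := fun z => conj (v 0) * (T z * v z))
      (analyticAt_const.mul (hT.mul hva)), taylorCoeff_const_mul,
      taylorCoeff_mul hT hva, taylorCoeff_sub hva analyticAt_const, taylorCoeff_const] at this
  have hS (k : ℕ) : taylorCoeff (schurTransform v) k = taylorCoeff T (k + 1) :=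
    taylorCoeff_dslope hT k
  have hT0 : taylorCoeff T 0 = 0 := by simp [T]
  have hnorm : conj (v 0) * v 0 = (‖v 0‖ : ℂ) ^ 2 := conj_mul' (v 0)
  have h1 := hcoeff 1
  have h2 := hcoeff 2
  norm_num [sum_range_succ, hT0] at h1 h2
  rw [← taylorCoeff_zero (schurTransform v), hS, hS]
  constructor
  · linear_combination -h1 - hnorm * taylorCoeff T 1
  · linear_combination -h2 - hnorm * taylorCoeff T 2 + conj (v 0) * taylorCoeff T 1 * h1
      + conj (v 0) * taylorCoeff T 1 ^ 2 * hnorm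

lemma norm_taylorCoeff_one_le (hv : DifferentiableOn ℂ v (ball 0 1))
    (hvb : MapsTo v (ball 0 1) (closedBall 0 1)) :
    ‖taylorCoeff v 1‖ ≤ 1 - ‖v 0‖ ^ 2 := by
  rcases (show ‖v 0‖ ≤ 1 by simpa using hvb (mem_ball_self one_pos)).eq_or_lt with h0 | h0
  · rw [taylorCoeff_succ_eq_zero_of_norm_eq_one hv hvb h0, h0]
    norm_num
  · have hS : ‖schurTransform v 0‖ ≤ 1 := by
      simpa using mapsTo_schurTransform hv hvb h0 (mem_ball_self one_pos)
    rw [(taylorCoeff_eq_schurTransform hv hvb h0).1, norm_mul, norm_one_sub_ofReal_norm_sq h0.le]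
    exact mul_le_of_le_one_right (by nlinarith [norm_nonneg (v 0)]) hS

lemma norm_mul_taylorCoeff_two_sub_sq_le (hv : DifferentiableOn ℂ v (ball 0 1))
    (hvb : MapsTo v (ball 0 1) (closedBall 0 1)) :
    ‖v 0 * taylorCoeff v 2 / 3 - taylorCoeff v 1 ^ 2 / 4‖ ≤ 1 / 4 := by
  rcases (show ‖v 0‖ ≤ 1 by simpa using hvb (mem_ball_self one_pos)).eq_or_lt with h0 | h0
  · rw [taylorCoeff_succ_eq_zero_of_norm_eq_one hv hvb h0 0,
      taylorCoeff_succ_eq_zero_of_norm_eq_one hv hvb h0 1]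
    norm_num
  · obtain ⟨h1, h2⟩ := taylorCoeff_eq_schurTransform hv hvb h0
    rw [h1, h2]
    exact norm_schur_combination_le h0.le <| by
      simpa using norm_taylorCoeff_one_le (differentiableOn_schurTransform hv hvb h0)
        (mapsTo_schurTransform hv hvb h0)

end SchurFunction

lemma norm_mul_taylorCoeff_two_sub_sq_le_of_mapsTo {h : ℂ → ℂ} {C : ℝ} (hC : 0 < C)
    (hh : DifferentiableOn ℂ h (ball 0 1)) (hhb : MapsTo h (ball 0 1) (closedBall 0 C)) :
    ‖h 0 * taylorCoeff h 2 / 3 - taylorCoeff h 1 ^ 2 / 4‖ ≤ C ^ 2 / 4 := by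
  have hCne : (C : ℂ) ≠ 0 := ofReal_ne_zero.2 hC.ne'
  have key := norm_mul_taylorCoeff_two_sub_sq_le (v := fun z => h z / C) (hh.div_const _)
    fun z hz => by simpa [norm_div, abs_of_pos hC, div_le_one hC] using hhb hz
  have hscale : h 0 / C * (taylorCoeff h 2 / C) / 3 - (taylorCoeff h 1 / C) ^ 2 / 4 =
      (h 0 * taylorCoeff h 2 / 3 - taylorCoeff h 1 ^ 2 / 4) / (C : ℂ) ^ 2 := by
    field_simp
  rw [taylorCoeff_div_const, taylorCoeff_div_const, hscale, norm_div, norm_pow, norm_real,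
    Real.norm_of_nonneg hC.le, div_le_iff₀ (by positivity)] at key
  linarith

lemma norm_taylorCoeff_two_mul_four_sub_sq_le {ω : ℂ → ℂ} {C : ℝ} (hC : 0 < C)
    (hω : DifferentiableOn ℂ ω (ball 0 1)) (hωb : MapsTo ω (ball 0 1) (closedBall 0 C))
    (hω0 : ω 0 = 0) (hω1 : deriv ω 0 = 0) :
    ‖taylorCoeff ω 2 * taylorCoeff ω 4 / 3 - taylorCoeff ω 3 ^ 2 / 4‖ ≤ C ^ 2 / 4 := by
  have hball : ball (0 : ℂ) 1 ∈ 𝓝 0 := ball_mem_nhds 0 one_pos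
  have hω' : DifferentiableOn ℂ (dslope ω 0) (ball 0 1) := (differentiableOn_dslope hball).2 hω
  have hh : DifferentiableOn ℂ (dslope (dslope ω 0) 0) (ball 0 1) :=
    (differentiableOn_dslope hball).2 hω'
  have hhb : MapsTo (dslope (dslope ω 0) 0) (ball 0 1) (closedBall 0 C) :=
    mapsTo_dslope_of_mapsTo_closedBall hω' (by rwa [dslope_same])
      (mapsTo_dslope_of_mapsTo_closedBall hω hω0 hωb)
  have hhc (k : ℕ) : taylorCoeff (dslope (dslope ω 0) 0) k = taylorCoeff ω (k + 2) := by
    rw [taylorCoeff_dslope (hω'.analyticAt hball), taylorCoeff_dslope (hω.analyticAt hball)]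
  simpa only [← taylorCoeff_zero (dslope (dslope ω 0) 0), hhc]
    using norm_mul_taylorCoeff_two_sub_sq_le_of_mapsTo hC hh hhb

theorem norm_hankelDet3_taylorCoeff_le {f : ℂ → ℂ} {lam : ℝ} (hlam0 : 0 < lam) (hlam1 : lam ≤ 1)
    (hf : DifferentiableOn ℂ f (ball 0 1)) (hf0 : f 0 = 0) (hf1 : deriv f 0 = 1)
    (hU : ∀ z ∈ ball (0 : ℂ) 1, z ≠ 0 → ‖(z / f z) ^ 2 * deriv f z - 1‖ < lam) :
    ‖hankelDet3 (taylorCoeff f)‖ ≤ lam ^ 2 / 4 := by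
  have hball : ball (0 : ℂ) 1 ∈ 𝓝 0 := ball_mem_nhds 0 one_pos
  have hfz : ∀ z ∈ ball (0 : ℂ) 1, z ≠ 0 → f z ≠ 0 := fun z hz hz0 hfz => by
    simpa [hfz] using (hU z hz hz0).trans_le hlam1
  have hF0 : ∀ z ∈ ball (0 : ℂ) 1, dslope f 0 z ≠ 0 := fun z hz => by
    rcases eq_or_ne z 0 with rfl | hz0
    · simp [hf1]
    · rw [dslope_of_ne _ hz0, slope_def_field, hf0, sub_zero, sub_zero]
      exact div_ne_zero (hfz z hz hz0) hz0
  set φ : ℂ → ℂ := fun z => (dslope f 0 z)⁻¹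
  have hφ : DifferentiableOn ℂ φ (ball 0 1) := ((differentiableOn_dslope hball).2 hf).inv hF0
  set ω : ℂ → ℂ := fun z => φ z - z * deriv φ z - 1
  have hω : DifferentiableOn ℂ ω (ball 0 1) :=
    (hφ.sub (differentiableOn_id.mul (hφ.deriv isOpen_ball))).sub_const 1
  have hω0 : ω 0 = 0 := by simp [ω, φ, hf1]
  have hωc (n : ℕ) : taylorCoeff ω (n + 1) = -n * taylorCoeff φ (n + 1) :=
    taylorCoeff_sub_mul_deriv_sub_one (hφ.analyticAt hball) n
  have hωb : MapsTo ω (ball 0 1) (closedBall 0 lam) := fun z hz => by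
    rw [mem_closedBall_zero_iff]
    rcases eq_or_ne z 0 with rfl | hz0
    · rw [hω0, norm_zero]
      exact hlam0.le
    · simp only [ω, φ, inv_dslope_sub_mul_deriv hf0 hz0 (hfz z hz hz0)
        (hf.differentiableAt (isOpen_ball.mem_nhds hz))]
      exact (hU z hz hz0).le
  have key := norm_taylorCoeff_two_mul_four_sub_sq_le hlam0 hω hωb hω0
    (by rw [← taylorCoeff_one, hωc 0]; simp)
  rw [hωc, hωc, hωc] at key
  rw [hankelDet3_taylorCoeff_eq (hf.analyticAt hball) hf1]
  convert key using 2
  push_cast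
  ring

theorem hankel3_U_lambda (f g : ℂ → ℂ) (lam : ℝ) (hlam0 : 0 < lam) (hlam1 : lam ≤ 1)
    (hf : AnalyticOnNhd ℂ f (ball 0 1)) (hf0 : f 0 = 0) (hf1 : deriv f 0 = 1)
    (hU : ∀ z ∈ ball (0:ℂ) 1, z ≠ 0 → ‖(z / f z) ^ 2 * deriv f z - 1‖ < lam)
    (a : ℕ → ℂ) (ha : ∀ n, a n = iteratedDeriv n f 0 / n.factorial)
    (hg : ∀ z, g z = z / (1 - ((lam:ℂ) / 2) * z ^ 3))
    (b : ℕ → ℂ) (hb : ∀ n, b n = iteratedDeriv n g 0 / n.factorial) :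
    ‖a 3 * (a 2 * a 4 - (a 3) ^ 2) - a 4 * (a 4 - a 2 * a 3) + a 5 * (a 3 - (a 2) ^ 2)‖
      ≤ lam ^ 2 / 4 ∧
    ‖b 3 * (b 2 * b 4 - (b 3) ^ 2) - b 4 * (b 4 - b 2 * b 3) + b 5 * (b 3 - (b 2) ^ 2)‖
      = lam ^ 2 / 4 := by
  obtain rfl : a = taylorCoeff f := funext ha
  obtain rfl : b = taylorCoeff g := funext hb
  obtain rfl : g = fun z => z / (1 - ((lam : ℂ) / 2) * z ^ 3) := funext hg
  refine ⟨norm_hankelDet3_taylorCoeff_le hlam0 hlam1 hf.differentiableOn hf0 hf1 hU, ?_⟩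
  change ‖hankelDet3 _‖ = _
  rw [hankelDet3_taylorCoeff_div_one_sub_mul_pow_three, norm_neg, norm_pow, norm_div, norm_real,
    Real.norm_of_nonneg hlam0.le, RCLike.norm_ofNat]
  ring
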